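/- If AB R CD and CD R EF for the same-length-same-direction relation R, with A ≠ B, then ⟪AB,EF⟫ = ⟪CD,CD⟫ = ‖CD‖², and consequently AB R EF (transitivity). -/
import Mathlib


/-- AB R CD iff (A = B and C = D) or (‖AB‖ = ‖CD‖ ≠ 0 and ⟪AB,CD⟫ = ‖AB‖·‖CD‖). -/
def ArrowRel {P : Type*} (inner : P → P → P → P → ℝ) (X Y : P × P) : Prop :=
  (X.1 = X.2 ∧ Y.1 = Y.2) ∨
  (Real.sqrt (inner X.1 X.2 X.1 X.2) = Real.sqrt (inner Y.1 Y.2 Y.1 Y.2) ∧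
    Real.sqrt (inner X.1 X.2 X.1 X.2) ≠ 0 ∧
    inner X.1 X.2 Y.1 Y.2 =
      Real.sqrt (inner X.1 X.2 X.1 X.2) * Real.sqrt (inner Y.1 Y.2 Y.1 Y.2))

/-- If AB R CD and CD R EF with A ≠ B, then ⟪AB,EF⟫ = ⟪CD,CD⟫ and AB R EF. -/
theorem arrowRel_trans_via_inner {P : Type*} (inner : P → P → P → P → ℝ)
    (hpos : ∀ A B : P, 0 ≤ inner A B A B)
    (hdef : ∀ A B : P, inner A B A B = 0 ↔ A = B)
    (hsymm : ∀ A B C D : P, inner A B C D = inner C D A B)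
    (hadd : ∀ A B C L M : P, inner A C L M = inner A B L M + inner B C L M)
    (hneg : ∀ A B C D : P, inner B A C D = - inner A B C D)
    (hsubst : ∀ A B C D E F G H : P,
      ArrowRel inner (A, B) (C, D) → ArrowRel inner (E, F) (G, H) →
        inner A B E F = inner C D G H)
    (A B C D E F : P) (hAB : A ≠ B)
    (h1 : ArrowRel inner (A, B) (C, D)) (h2 : ArrowRel inner (C, D) (E, F)) :
    inner A B E F = inner C D C D ∧ ArrowRel inner (A, B) (E, F) := by
  have hABne : Real.sqrt (inner A B A B) ≠ 0 := by
    intro h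
    exact hAB ((hdef A B).mp (by
      have := Real.sqrt_eq_zero (hpos A B) |>.mp h
      exact this))
  rcases h1 with ⟨hA, _⟩ | ⟨hlen1, hne1, hin1⟩
  · exact absurd hA hAB
  simp only at hlen1 hne1 hin1
  have hCDne : Real.sqrt (inner C D C D) ≠ 0 := hlen1 ▸ hne1
  have hCD : C ≠ D := by
    intro h
    exact hCDne (by rw [Real.sqrt_eq_zero (hpos C D)]; exact (hdef C D).mpr h)
  rcases h2 with ⟨hC, _⟩ | ⟨hlen2, hne2, hin2⟩
  · exact absurd hC hCD
  simp only at hlen2 hne2 hin2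
  have hEFne : Real.sqrt (inner E F E F) ≠ 0 := hlen2 ▸ hne2
  have hEF : E ≠ F := by
    intro h
    exact hEFne (by rw [Real.sqrt_eq_zero (hpos E F)]; exact (hdef E F).mpr h)
  have hrefl : ArrowRel inner (E, F) (E, F) := by
    right
    refine ⟨rfl, hEFne, ?_⟩
    simp only
    exact (Real.mul_self_sqrt (hpos E F)).symm
  have key : inner A B E F = inner C D E F :=
    hsubst A B C D E F E F (Or.inr ⟨hlen1, hne1, hin1⟩) hrefl
  have hCDsq : inner C D C D = Real.sqrt (inner C D C D) * Real.sqrt (inner C D C D) :=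
    (Real.mul_self_sqrt (hpos C D)).symm
  constructor
  · rw [key, hin2, ← hlen2, ← hCDsq]
  · right
    refine ⟨hlen1.trans hlen2, hne1, ?_⟩
    simp only
    rw [key, hin2, ← hlen1]
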